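/- For n > 0 and S ⊆ [2n-1] with |S| = k, the number of Dyck paths of length 2n whose descent set equals S is equal to the number of semistandard Young tableaux of shape (2,2,...,2) (k rows of length 2) with all entries less than n and with row sums (T_{i1}+T_{i2})_{i=1..k} listing the elements of S. -/
import Mathlib

open Finset

/-- The `i`-th letter (1-indexed) of a word `w`; `true` = vertical step `v`,
`false` = horizontal step `h`; junk value `false` out of range. -/
def ltr {m : ℕ} (w : Fin m → Bool) (i : ℕ) : Bool :=
  if h : 1 ≤ i ∧ i ≤ m then w ⟨i - 1, by omega⟩ else false

/-- The number of occurrences of the letter `b` among the first `i` letters of `w`. -/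
def pcnt {m : ℕ} (w : Fin m → Bool) (b : Bool) (i : ℕ) : ℕ :=
  ((Finset.Icc 1 i).filter fun j => ltr w j = b).card

/-- `w` is a Dyck path of length `2n`: `n` vertical steps and every prefix has at
least as many `v`'s as `h`'s. -/
def IsDyck (n : ℕ) (w : Fin (2 * n) → Bool) : Prop :=
  pcnt w true (2 * n) = n ∧ ∀ i ≤ 2 * n, pcnt w false i ≤ pcnt w true i

/-- The descent (valley) set of `w`: positions `i` with `w_i = h`, `w_{i+1} = v`. -/
def Des {n : ℕ} (w : Fin (2 * n) → Bool) : Finset ℕ :=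
  (Finset.Icc 1 (2 * n - 1)).filter fun i => ltr w i = false ∧ ltr w (i + 1) = true

section basic
variable {m : ℕ} (w : Fin m → Bool)

lemma pcnt_zero (b : Bool) : pcnt w b 0 = 0 := by
  simp [pcnt]

lemma pcnt_succ (b : Bool) (t : ℕ) :
    pcnt w b (t + 1) = pcnt w b t + if ltr w (t + 1) = b then 1 else 0 := by
  unfold pcnt
  rw [show Finset.Icc 1 (t+1) = insert (t+1) (Finset.Icc 1 t) from
    (Finset.insert_Icc_right_eq_Icc_add_one (by omega)).symm]
  rw [Finset.filter_insert]
  split_ifs with h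
  · rw [Finset.card_insert_of_notMem (by simp)]
  · rfl

lemma pcnt_mono (b : Bool) {s t : ℕ} (h : s ≤ t) : pcnt w b s ≤ pcnt w b t := by
  apply Finset.card_le_card
  exact Finset.filter_subset_filter _ (Finset.Icc_subset_Icc_right h)

lemma pcnt_true_add_false (t : ℕ) : pcnt w true t + pcnt w false t = t := by
  induction t with
  | zero => simp [pcnt_zero]
  | succ t ih =>
    rw [pcnt_succ, pcnt_succ]
    cases h : ltr w (t+1) <;> simp [h] <;> omega

lemma pcnt_le_add (b : Bool) {a t : ℕ} (h : a ≤ t) : pcnt w b t ≤ pcnt w b a + (t - a) := by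
  induction t with
  | zero =>
    have : a = 0 := by omega
    subst this; simp
  | succ t ih =>
    rcases Nat.eq_or_lt_of_le h with h' | h'
    · subst h'; simp
    · have := ih (by omega)
      rw [pcnt_succ]
      split_ifs <;> omega

lemma pcnt_pos (b : Bool) {t : ℕ} (ht : 1 ≤ t) (h : ltr w t = b) : 1 ≤ pcnt w b t := by
  obtain ⟨t, rfl⟩ := Nat.exists_eq_add_of_le ht
  rw [show 1 + t = t + 1 by omega] at h ⊢
  rw [pcnt_succ]
  simp [h]

lemma run_false {a c : ℕ}
    (hno : ∀ u, a ≤ u → u < c → ¬(ltr w u = false ∧ ltr w (u + 1) = true))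
    (ha : ltr w a = false) : ∀ u, a ≤ u → u ≤ c → ltr w u = false := by
  intro u hau huc
  induction u with
  | zero => simpa [Nat.le_zero.mp hau] using ha
  | succ u ih =>
    rcases Nat.eq_or_lt_of_le hau with h' | h'
    · exact h' ▸ ha
    · have hu : ltr w u = false := ih (by omega) (by omega)
      have := hno u (by omega) (by omega)
      cases h : ltr w (u+1)
      · rfl
      · exact absurd ⟨hu, h⟩ this

lemma pcnt_run_true {a t : ℕ} (h : a ≤ t)
    (hv : ∀ u, a < u → u ≤ t → ltr w u = true) :
    pcnt w true t = pcnt w true a + (t - a) := by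
  induction t with
  | zero =>
    have : a = 0 := by omega
    subst this; simp
  | succ t ih =>
    rcases Nat.eq_or_lt_of_le h with h' | h'
    · subst h'; simp
    · have := ih (by omega) (fun u h1 h2 => hv u h1 (by omega))
      rw [pcnt_succ, hv (t+1) (by omega) le_rfl]
      simp; omega

lemma pcnt_run_false {c b : ℕ} (h : c ≤ b)
    (hh : ∀ u, c < u → u ≤ b → ltr w u = false) :
    pcnt w true b = pcnt w true c := by
  induction b with
  | zero =>
    have : c = 0 := by omega
    subst this; rfl
  | succ b ih =>
    rcases Nat.eq_or_lt_of_le h with h' | h'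
    · subst h'; rfl
    · have := ih (by omega) (fun u h1 h2 => hh u h1 (by omega))
      rw [pcnt_succ, hh (b+1) (by omega) le_rfl]
      simp; omega

lemma letter_char {a b t : ℕ} (hat : a < t) (htb : t ≤ b)
    (hno : ∀ u, a < u → u < b → ¬(ltr w u = false ∧ ltr w (u + 1) = true)) :
    ltr w t = true ↔ t ≤ pcnt w false a + pcnt w true b := by
  constructor
  · intro ht
    -- all letters in (a, t] are true
    have hv : ∀ u, a < u → u ≤ t → ltr w u = true := by
      intro u hau hut
      by_contra hu
      rw [Bool.not_eq_true] at hu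
      have := run_false w (fun v hv1 hv2 => hno v (by omega) (by omega)) hu t hut le_rfl
      rw [ht] at this; exact absurd this (by simp)
    have h1 := pcnt_run_true w (le_of_lt hat) hv
    have h2 := pcnt_true_add_false w a
    have h3 := pcnt_mono w true htb
    omega
  · intro hle
    cases ht : ltr w t
    · exfalso
      have hh : ∀ u, t ≤ u → u ≤ b → ltr w u = false :=
        run_false w (fun v hv1 hv2 => hno v (by omega) (by omega)) ht
      have h1 : pcnt w true b = pcnt w true (t-1) := by
        apply pcnt_run_false w (by omega)
        intro u h1 h2; exact hh u (by omega) h2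
      have h2 : pcnt w true (t-1) ≤ pcnt w true a + (t - 1 - a) := pcnt_le_add w true (by omega)
      have h3 := pcnt_true_add_false w a
      omega
    · rfl

end basic

section construct

lemma chain_lt {k : ℕ} {f : ℕ → ℕ} (h : ∀ j ≤ k, f j < f (j + 1)) :
    ∀ {i j : ℕ}, i < j → j ≤ k + 1 → f i < f j := by
  intro i j hij hj
  induction j with
  | zero => omega
  | succ j ih =>
    rcases Nat.lt_succ_iff_lt_or_eq.mp hij with h' | h'
    · exact lt_trans (ih h' (by omega)) (h j (by omega))
    · subst h'; exact h i (by omega)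

lemma chain_le {k : ℕ} {f : ℕ → ℕ} (h : ∀ j ≤ k, f j < f (j + 1)) :
    ∀ {i j : ℕ}, i ≤ j → j ≤ k + 1 → f i ≤ f j := by
  intro i j hij hj
  rcases Nat.eq_or_lt_of_le hij with h' | h'
  · subst h'; rfl
  · exact le_of_lt (chain_lt h h' hj)

lemma exists_seg {f : ℕ → ℕ} {K t : ℕ} (hK : 0 < K) (h0 : f 0 ≤ t) (hK2 : t ≤ f K) :
    ∃ j, j + 1 ≤ K ∧ f j ≤ t ∧ t ≤ f (j + 1) := by
  induction K with
  | zero => omega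
  | succ K ih =>
    rcases Nat.eq_zero_or_pos K with h | h
    · subst h; exact ⟨0, le_rfl, h0, hK2⟩
    · rcases le_or_gt t (f K) with h' | h'
      · obtain ⟨j, hj1, hj2⟩ := ih h h'
        exact ⟨j, by omega, hj2⟩
      · exact ⟨K, le_rfl, le_of_lt h', hK2⟩

variable (n k : ℕ) (P Q : ℕ → ℕ)

/-- The explicit Dyck word with valleys at `(Q j, P j)`, `1 ≤ j ≤ k`. -/
noncomputable def wrd : Fin (2 * n) → Bool := fun i =>
  @decide (∃ j ≤ k, P j + Q j < i.1 + 1 ∧ i.1 + 1 ≤ P (j + 1) + Q j)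
    (Classical.propDecidable _)

structure Valid : Prop where
  P0 : P 0 = 0
  Q0 : Q 0 = 0
  Pk : P (k + 1) = n
  Qk : Q (k + 1) = n
  Pstep : ∀ j ≤ k, P j < P (j + 1)
  Qstep : ∀ j ≤ k, Q j < Q (j + 1)
  QP : ∀ j ≤ k + 1, Q j ≤ P j

variable {n k P Q}

lemma Valid.Dstep (hv : Valid n k P Q) : ∀ j ≤ k, P j + Q j < P (j + 1) + Q (j + 1) :=
  fun j hj => by have := hv.Pstep j hj; have := hv.Qstep j hj; omega

lemma ltr_wrd {t : ℕ} (h1 : 1 ≤ t) (h2 : t ≤ 2 * n) :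
    (ltr (wrd n k P Q) t = true ↔ ∃ j ≤ k, P j + Q j < t ∧ t ≤ P (j + 1) + Q j) := by
  unfold ltr wrd
  rw [dif_pos ⟨h1, h2⟩]
  have ht : t - 1 + 1 = t := by omega
  simp only [decide_eq_true_eq, ht]

lemma seg_unique (hv : Valid n k P Q) {t j j' : ℕ} (hj : j ≤ k) (hj' : j' ≤ k)
    (h1 : P j + Q j < t) (h2 : t ≤ P (j + 1) + Q (j + 1))
    (h1' : P j' + Q j' < t) (h2' : t ≤ P (j' + 1) + Q (j' + 1)) : j = j' := by
  by_contra hne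
  rcases Nat.lt_or_ge j j' with h | h
  · have : P (j + 1) + Q (j + 1) ≤ P j' + Q j' :=
      chain_le hv.Dstep (by omega) (by omega)
    omega
  · have : P (j' + 1) + Q (j' + 1) ≤ P j + Q j :=
      chain_le hv.Dstep (by omega) (by omega)
    omega

lemma pcnt_wrd (hv : Valid n k P Q) :
    ∀ t, ∀ j ≤ k, P j + Q j ≤ t → t ≤ P (j + 1) + Q (j + 1) →
      pcnt (wrd n k P Q) true t = min (t - Q j) (P (j + 1)) := by
  intro t
  induction t with
  | zero =>
    intro j hj h1 h2
    have hj0 : j = 0 := by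
      by_contra h
      have := chain_lt hv.Dstep (i := 0) (j := j) (by omega) (by omega)
      rw [hv.P0, hv.Q0] at this
      omega
    subst hj0
    rw [pcnt_zero, hv.Q0]
    omega
  | succ t ih =>
    intro j hj h1 h2
    have hDk : P (j + 1) + Q (j + 1) ≤ P (k + 1) + Q (k + 1) :=
      chain_le hv.Dstep (by omega) (by omega)
    have h2n : t + 1 ≤ 2 * n := by
      rw [hv.Pk, hv.Qk] at hDk; omega
    have hQPj : Q j ≤ P j := hv.QP j (by omega)
    have hQPj1 : Q (j + 1) ≤ P (j + 1) := hv.QP (j + 1) (by omega)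
    rw [pcnt_succ]
    rcases Nat.eq_or_lt_of_le h1 with hEq | hlt
    · -- t + 1 = P j + Q j : a valley, the letter is false
      obtain ⟨j', rfl⟩ : ∃ j', j = j' + 1 := by
        refine ⟨j - 1, ?_⟩
        rcases Nat.eq_zero_or_pos j with h | h
        · exfalso; rw [h, hv.P0, hv.Q0] at hEq; omega
        · omega
      have hQs : Q j' < Q (j' + 1) := hv.Qstep j' (by omega)
      have hPs : P j' < P (j' + 1) := hv.Pstep j' (by omega)
      have hPs2 : P (j' + 1) < P (j' + 1 + 1) := hv.Pstep (j' + 1) (by omega)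
      have hlf : ltr (wrd n k P Q) (t + 1) ≠ true := by
        intro hcontra
        rw [ltr_wrd (by omega) h2n] at hcontra
        obtain ⟨j'', hj'', ha, hb⟩ := hcontra
        have hb' : t + 1 ≤ P (j'' + 1) + Q (j'' + 1) := by
          have := hv.Qstep j'' hj''
          omega
        have : j'' = j' := by
          apply seg_unique hv hj'' (by omega) ha hb'
          · omega
          · omega
        subst this
        omega
      rw [if_neg hlf]
      have hD : P j' + Q j' ≤ t := by
        have := hv.Dstep j' (by omega)
        omega
      rw [ih j' (by omega) hD (by omega)]
      have hQP' : Q j' ≤ P j' := hv.QP j' (by omega)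
      omega
    · -- P j + Q j ≤ t
      have hpt := ih j hj (by omega) (by omega)
      by_cases hc : t + 1 ≤ P (j + 1) + Q j
      · have hl : ltr (wrd n k P Q) (t + 1) = true :=
          (ltr_wrd (by omega) h2n).mpr ⟨j, hj, by omega, hc⟩
        rw [if_pos hl, hpt]
        omega
      · have hlf : ltr (wrd n k P Q) (t + 1) ≠ true := by
          intro hcontra
          rw [ltr_wrd (by omega) h2n] at hcontra
          obtain ⟨j'', hj'', ha, hb⟩ := hcontra
          have hb' : t + 1 ≤ P (j'' + 1) + Q (j'' + 1) := by
            have := hv.Qstep j'' hj''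
            omega
          have : j'' = j := seg_unique hv hj'' hj ha hb' (by omega) h2
          subst this
          omega
        rw [if_neg hlf, hpt]
        omega

end construct

lemma wrd_dyck (hv : Valid n k P Q) : IsDyck n (wrd n k P Q) := by
  have hD2n : P (k + 1) + Q (k + 1) = 2 * n := by rw [hv.Pk, hv.Qk]; omega
  constructor
  · have hDk : P k + Q k ≤ P (k + 1) + Q (k + 1) :=
      chain_le hv.Dstep (by omega) (by omega)
    have := pcnt_wrd hv (2 * n) k le_rfl (by omega) (by omega)
    have hQk : Q k < Q (k + 1) := hv.Qstep k le_rfl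
    rw [this, hv.Pk]
    rw [hv.Qk] at hQk
    omega
  · intro i hi
    obtain ⟨j, hj1, hj2, hj3⟩ := exists_seg (f := fun j => P j + Q j) (K := k + 1)
      (by omega) (show P 0 + Q 0 ≤ i by rw [hv.P0, hv.Q0]; omega)
      (show i ≤ P (k + 1) + Q (k + 1) by omega)
    have hpc := pcnt_wrd hv i j (by omega) hj2 hj3
    have hsum := pcnt_true_add_false (wrd n k P Q) i
    have h1 : Q j ≤ P j := hv.QP j (by omega)
    have h2 : Q (j + 1) ≤ P (j + 1) := hv.QP (j + 1) (by omega)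
    omega

lemma pcnt_wrd_valley (hv : Valid n k P Q) {j : ℕ} (h1 : 1 ≤ j) (h2 : j ≤ k) :
    pcnt (wrd n k P Q) true (P j + Q j) = P j ∧
      pcnt (wrd n k P Q) false (P j + Q j) = Q j := by
  have hD : P j + Q j ≤ P (j + 1) + Q (j + 1) := le_of_lt (hv.Dstep j h2)
  have hpc := pcnt_wrd hv (P j + Q j) j h2 le_rfl hD
  have hsum := pcnt_true_add_false (wrd n k P Q) (P j + Q j)
  have hq : Q j ≤ P j := hv.QP j (by omega)
  have hp : P j < P (j + 1) := hv.Pstep j h2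
  constructor <;> omega

lemma mem_des_wrd (hv : Valid n k P Q) (hn : 0 < n) {t : ℕ} :
    t ∈ Des (wrd n k P Q) ↔ ∃ j, 1 ≤ j ∧ j ≤ k ∧ t = P j + Q j := by
  have hD2n : P (k + 1) + Q (k + 1) = 2 * n := by rw [hv.Pk, hv.Qk]; omega
  unfold Des
  rw [Finset.mem_filter, Finset.mem_Icc]
  constructor
  · rintro ⟨⟨ht1, ht2⟩, hf, htv⟩
    rw [ltr_wrd (by omega) (by omega)] at htv
    obtain ⟨j, hj, ha, hb⟩ := htv
    have hPQt : P j + Q j = t := by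
      rcases Nat.eq_or_lt_of_le (by omega : P j + Q j ≤ t) with h | h
      · exact h
      · exfalso
        have hcon : ltr (wrd n k P Q) t = true := by
          rw [ltr_wrd (by omega) (by omega)]
          exact ⟨j, hj, h, by omega⟩
        rw [hf] at hcon; exact absurd hcon (by simp)
    have hj1 : 1 ≤ j := by
      by_contra h
      have h0 : j = 0 := by omega
      rw [h0, hv.P0, hv.Q0] at hPQt
      omega
    exact ⟨j, hj1, hj, hPQt.symm⟩
  · rintro ⟨j, hj1, hj2, rfl⟩
    have hDlt : P j + Q j < P (k + 1) + Q (k + 1) :=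
      chain_lt hv.Dstep (by omega) (by omega)
    have hD0 : 0 < P j + Q j := by
      have := chain_lt hv.Dstep (i := 0) (j := j) (by omega) (by omega)
      rw [hv.P0, hv.Q0] at this; omega
    have hPs : P j < P (j + 1) := hv.Pstep j hj2
    refine ⟨⟨by omega, by omega⟩, ?_, ?_⟩
    · cases hlt : ltr (wrd n k P Q) (P j + Q j)
      · rfl
      · exfalso
        rw [ltr_wrd (by omega) (by omega)] at hlt
        obtain ⟨j'', hj'', ha, hb⟩ := hlt
        have hb' : P j + Q j ≤ P (j'' + 1) + Q (j'' + 1) := by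
          have := hv.Qstep j'' hj''
          omega
        have : j'' = j - 1 := by
          obtain ⟨j', rfl⟩ : ∃ j', j = j' + 1 := ⟨j - 1, by omega⟩
          have hD' : P j' + Q j' < P (j' + 1) + Q (j' + 1) := hv.Dstep j' (by omega)
          have := seg_unique hv hj'' (show j' ≤ k by omega) ha hb' hD' le_rfl
          omega
        subst this
        obtain ⟨j', rfl⟩ : ∃ j', j = j' + 1 := ⟨j - 1, by omega⟩
        simp only [Nat.add_sub_cancel] at ha hb
        have := hv.Qstep j' (by omega)
        omega
    · rw [ltr_wrd (by omega) (by omega)]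
      exact ⟨j, hj2, by omega, by omega⟩

lemma ltr_eq_apply {m : ℕ} (w : Fin m → Bool) (i : Fin m) : ltr w (i.1 + 1) = w i := by
  unfold ltr
  rw [dif_pos ⟨by omega, by omega⟩]
  simp

lemma mem_Des_iff {n : ℕ} {w : Fin (2 * n) → Bool} {u : ℕ} :
    u ∈ Des w ↔ (1 ≤ u ∧ u ≤ 2 * n - 1) ∧ ltr w u = false ∧ ltr w (u + 1) = true := by
  unfold Des
  rw [Finset.mem_filter, Finset.mem_Icc]

lemma word_eq {n : ℕ} {w w' : Fin (2 * n) → Bool}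
    (hDes : Des w = Des w')
    (htrue : ∀ s ∈ Des w, pcnt w true s = pcnt w' true s)
    (htot : pcnt w true (2 * n) = pcnt w' true (2 * n)) : w = w' := by
  funext i
  have hi2 : i.1 + 1 ≤ 2 * n := i.2
  set t := i.1 + 1 with hti
  set S := Des w with hSdef
  set A : Finset ℕ := insert 0 (S.filter (· < t)) with hA
  set B : Finset ℕ := insert (2 * n) (S.filter (t ≤ ·)) with hB
  have hAne : A.Nonempty := ⟨0, Finset.mem_insert_self _ _⟩
  have hBne : B.Nonempty := ⟨2 * n, Finset.mem_insert_self _ _⟩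
  set a := A.max' hAne with hadef
  set b := B.min' hBne with hbdef
  have ha_lt : a < t := by
    rw [hadef]
    apply Finset.max'_lt_iff A hAne |>.mpr
    intro x hx
    rcases Finset.mem_insert.mp hx with h | h
    · omega
    · exact (Finset.mem_filter.mp h).2
  have hb_ge : t ≤ b := by
    rw [hbdef]
    apply Finset.le_min'
    intro x hx
    rcases Finset.mem_insert.mp hx with h | h
    · omega
    · exact (Finset.mem_filter.mp h).2
  have hb_le : b ≤ 2 * n := Finset.min'_le B _ (Finset.mem_insert_self _ _)
  have ha_mem : a = 0 ∨ a ∈ S := by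
    rcases Finset.mem_insert.mp (Finset.max'_mem A hAne) with h | h
    · exact Or.inl h
    · exact Or.inr (Finset.mem_filter.mp h).1
  have hb_mem : b = 2 * n ∨ b ∈ S := by
    rcases Finset.mem_insert.mp (Finset.min'_mem B hBne) with h | h
    · exact Or.inl h
    · exact Or.inr (Finset.mem_filter.mp h).1
  have hnoS : ∀ u, a < u → u < b → u ∉ S := by
    intro u h1 h2 hu
    rcases Nat.lt_or_ge u t with h | h
    · have : u ≤ a := Finset.le_max' A u (Finset.mem_insert_of_mem (Finset.mem_filter.mpr ⟨hu, h⟩))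
      omega
    · have : b ≤ u := Finset.min'_le B u (Finset.mem_insert_of_mem (Finset.mem_filter.mpr ⟨hu, h⟩))
      omega
  have hrange : ∀ u, a < u → u < b → (1 ≤ u ∧ u ≤ 2 * n - 1) := by
    intro u h1 h2; omega
  have hno : ∀ u, a < u → u < b → ¬(ltr w u = false ∧ ltr w (u + 1) = true) := by
    intro u h1 h2 hc
    exact hnoS u h1 h2 (mem_Des_iff.mpr ⟨hrange u h1 h2, hc⟩)
  have hno' : ∀ u, a < u → u < b → ¬(ltr w' u = false ∧ ltr w' (u + 1) = true) := by
    intro u h1 h2 hc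
    exact hnoS u h1 h2 (hDes ▸ mem_Des_iff.mpr ⟨hrange u h1 h2, hc⟩)
  have hfa : pcnt w false a = pcnt w' false a := by
    rcases ha_mem with h | h
    · rw [h, pcnt_zero, pcnt_zero]
    · have h1 := pcnt_true_add_false w a
      have h2 := pcnt_true_add_false w' a
      have := htrue a h
      omega
  have htb : pcnt w true b = pcnt w' true b := by
    rcases hb_mem with h | h
    · rw [h]; exact htot
    · exact htrue b h
  have key := (letter_char w ha_lt hb_ge hno).trans
    (Iff.trans (by rw [hfa, htb]) (letter_char w' ha_lt hb_ge hno').symm)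
  have : ltr w t = ltr w' t := by
    cases h : ltr w' t
    · cases h2 : ltr w t
      · rfl
      · exact absurd (key.mp h2) (by rw [h]; simp)
    · exact key.mpr (h ▸ rfl)
  rwa [hti, ltr_eq_apply, ltr_eq_apply] at this

/-- Extension of a `Fin k`-indexed sequence to `ℕ` with value `0` at `0` and `n` above `k`. -/
def Pext (n k : ℕ) (g : Fin k → ℕ) : ℕ → ℕ := fun j =>
  if h : 1 ≤ j ∧ j ≤ k then g ⟨j - 1, by omega⟩ else if j = 0 then 0 else n

lemma Pext_zero (n k : ℕ) (g : Fin k → ℕ) : Pext n k g 0 = 0 := by simp [Pext]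

lemma Pext_top (n k : ℕ) (g : Fin k → ℕ) : Pext n k g (k + 1) = n := by
  unfold Pext
  rw [dif_neg (by omega)]
  simp

lemma Pext_fin (n k : ℕ) (g : Fin k → ℕ) (i : Fin k) : Pext n k g (i.1 + 1) = g i := by
  unfold Pext
  rw [dif_pos ⟨by omega, by omega⟩]
  simp

lemma valid_ext {n k : ℕ} (hn : 0 < n) {q p : Fin k → ℕ}
    (h1 : ∀ i j : Fin k, i < j → q i < q j) (h2 : ∀ i j : Fin k, i < j → p i < p j)
    (h3 : ∀ i : Fin k, 1 ≤ q i ∧ q i ≤ p i ∧ p i < n) :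
    Valid n k (Pext n k p) (Pext n k q) := by
  have step : ∀ (g : Fin k → ℕ), (∀ i j : Fin k, i < j → g i < g j) →
      (∀ i : Fin k, 1 ≤ g i ∧ g i < n) → ∀ j ≤ k, Pext n k g j < Pext n k g (j + 1) := by
    intro g hmono hbnd j hj
    unfold Pext
    rcases Nat.eq_zero_or_pos j with h0 | h0
    · subst h0
      rw [dif_neg (by omega), if_pos rfl]
      by_cases hk : 1 ≤ k
      · rw [dif_pos ⟨le_rfl, hk⟩]
        exact (hbnd _).1
      · rw [dif_neg (by omega), if_neg (by omega)]
        omega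
    · rw [dif_pos ⟨h0, hj⟩]
      by_cases hk : j + 1 ≤ k
      · rw [dif_pos ⟨by omega, hk⟩]
        exact hmono _ _ (by simp [Fin.lt_def]; omega)
      · rw [dif_neg (by omega), if_neg (by omega)]
        exact (hbnd _).2
  refine ⟨Pext_zero n k p, Pext_zero n k q, Pext_top n k p, Pext_top n k q, ?_, ?_, ?_⟩
  · exact step p h2 (fun i => ⟨by have := h3 i; omega, (h3 i).2.2⟩)
  · exact step q h1 (fun i => ⟨(h3 i).1, by have := h3 i; omega⟩)
  · intro j hj
    unfold Pext
    by_cases h : 1 ≤ j ∧ j ≤ k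
    · rw [dif_pos h, dif_pos h]
      exact (h3 _).2.1
    · simp only [dif_neg h]
      exact le_refl _

lemma Gprop {n k : ℕ} {S : Finset ℕ} {w : Fin (2 * n) → Bool}
    (hw : IsDyck n w) (hdes : Des w = S) (hk : S.card = k) :
    (∀ i j : Fin k, i < j →
      pcnt w false (S.orderEmbOfFin hk i) < pcnt w false (S.orderEmbOfFin hk j)) ∧
    (∀ i j : Fin k, i < j →
      pcnt w true (S.orderEmbOfFin hk i) < pcnt w true (S.orderEmbOfFin hk j)) ∧
    (∀ i : Fin k, 1 ≤ pcnt w false (S.orderEmbOfFin hk i) ∧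
      pcnt w false (S.orderEmbOfFin hk i) ≤ pcnt w true (S.orderEmbOfFin hk i) ∧
      pcnt w true (S.orderEmbOfFin hk i) < n) ∧
    Finset.image (fun i => pcnt w false (S.orderEmbOfFin hk i) +
      pcnt w true (S.orderEmbOfFin hk i)) Finset.univ = S := by
  set f := S.orderEmbOfFin hk with hfdef
  have hfmem : ∀ i, f i ∈ Des w := fun i => hdes ▸ S.orderEmbOfFin_mem hk i
  have hfact : ∀ i : Fin k, (1 ≤ f i ∧ f i ≤ 2 * n - 1) ∧
      ltr w (f i) = false ∧ ltr w (f i + 1) = true := fun i => mem_Des_iff.mp (hfmem i)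
  have hfmono : StrictMono (f : Fin k → ℕ) := (S.orderEmbOfFin hk).strictMono
  have hrange : ∀ i : Fin k, 1 ≤ f i ∧ f i + 1 ≤ 2 * n := by
    intro i
    have := (hfact i).1
    omega
  have hsucc_true : ∀ i : Fin k, pcnt w true (f i + 1) = pcnt w true (f i) + 1 := by
    intro i
    rw [pcnt_succ, (hfact i).2.2]
    simp
  refine ⟨?_, ?_, ?_, ?_⟩
  · intro i j hij
    have hlt := hfmono hij
    have e : f j - 1 + 1 = f j := by have := (hrange j).1; omega
    have hstep := pcnt_succ w false (f j - 1)
    rw [e, (hfact j).2.1] at hstep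
    simp at hstep
    have hmono := pcnt_mono w false (show f i ≤ f j - 1 by omega)
    omega
  · intro i j hij
    have hlt := hfmono hij
    have hmono := pcnt_mono w true (show f i + 1 ≤ f j from hlt)
    have := hsucc_true i
    omega
  · intro i
    refine ⟨pcnt_pos w false (hrange i).1 (hfact i).2.1, hw.2 (f i) (by have := hrange i; omega), ?_⟩
    have h1 := hsucc_true i
    have h2 := pcnt_mono w true (hrange i).2
    rw [hw.1] at h2
    omega
  · have hsum : ∀ i : Fin k, pcnt w false (f i) + pcnt w true (f i) = f i := by
      intro i
      have := pcnt_true_add_false w (f i)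
      omega
    ext s
    rw [Finset.mem_image]
    constructor
    · rintro ⟨i, -, rfl⟩
      rw [hsum i]
      exact S.orderEmbOfFin_mem hk i
    · intro hs
      have : s ∈ Set.range f := by
        rw [hfdef, S.range_orderEmbOfFin hk]
        exact hs
      obtain ⟨i, rfl⟩ := this
      exact ⟨i, Finset.mem_univ i, hsum i⟩

lemma Fprop {n k : ℕ} {S : Finset ℕ} (hn : 0 < n) {q p : Fin k → ℕ}
    (h1 : ∀ i j : Fin k, i < j → q i < q j) (h2 : ∀ i j : Fin k, i < j → p i < p j)
    (h3 : ∀ i : Fin k, 1 ≤ q i ∧ q i ≤ p i ∧ p i < n)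
    (h4 : Finset.image (fun i => q i + p i) Finset.univ = S) :
    IsDyck n (wrd n k (Pext n k p) (Pext n k q)) ∧
    Des (wrd n k (Pext n k p) (Pext n k q)) = S ∧
    (∀ i : Fin k, pcnt (wrd n k (Pext n k p) (Pext n k q)) true (q i + p i) = p i ∧
      pcnt (wrd n k (Pext n k p) (Pext n k q)) false (q i + p i) = q i) := by
  have hv := valid_ext hn h1 h2 h3
  refine ⟨wrd_dyck hv, ?_, ?_⟩
  · ext t
    rw [mem_des_wrd hv hn, ← h4, Finset.mem_image]
    constructor
    · rintro ⟨j, hj1, hj2, rfl⟩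
      obtain ⟨j', rfl⟩ : ∃ j', j = j' + 1 := ⟨j - 1, by omega⟩
      have hp := Pext_fin n k p ⟨j', by omega⟩
      have hq := Pext_fin n k q ⟨j', by omega⟩
      simp only [Fin.val_mk] at hp hq
      refine ⟨⟨j', by omega⟩, Finset.mem_univ _, ?_⟩
      rw [hp, hq]
      omega
    · rintro ⟨i, -, rfl⟩
      exact ⟨i.1 + 1, by omega, by omega, by rw [Pext_fin, Pext_fin]; omega⟩
  · intro i
    have := pcnt_wrd_valley hv (j := i.1 + 1) (by omega) (by omega)
    rw [Pext_fin, Pext_fin] at this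
    rw [show q i + p i = p i + q i from by omega]
    exact this

lemma GFlemma {n k : ℕ} {S : Finset ℕ} (hn : 0 < n) {q p : Fin k → ℕ}
    (h1 : ∀ i j : Fin k, i < j → q i < q j) (h2 : ∀ i j : Fin k, i < j → p i < p j)
    (h3 : ∀ i : Fin k, 1 ≤ q i ∧ q i ≤ p i ∧ p i < n)
    (h4 : Finset.image (fun i => q i + p i) Finset.univ = S) (hk : S.card = k) :
    ∀ i : Fin k, pcnt (wrd n k (Pext n k p) (Pext n k q)) false (S.orderEmbOfFin hk i) = q i ∧
      pcnt (wrd n k (Pext n k p) (Pext n k q)) true (S.orderEmbOfFin hk i) = p i := by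
  have hfeq : (fun i : Fin k => q i + p i) = S.orderEmbOfFin hk := by
    apply Finset.orderEmbOfFin_unique hk
    · intro i
      rw [← h4]
      exact Finset.mem_image.mpr ⟨i, Finset.mem_univ i, rfl⟩
    · intro i j hij
      exact add_lt_add (h1 i j hij) (h2 i j hij)
  intro i
  have hval := (Fprop hn h1 h2 h3 h4).2.2 i
  rw [← congrFun hfeq i]
  exact ⟨hval.2, hval.1⟩

lemma FGlemma {n k : ℕ} {S : Finset ℕ} (hn : 0 < n) {w : Fin (2 * n) → Bool}
    (hw : IsDyck n w) (hdes : Des w = S) (hk : S.card = k) :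
    wrd n k (Pext n k (fun i => pcnt w true (S.orderEmbOfFin hk i)))
      (Pext n k (fun i => pcnt w false (S.orderEmbOfFin hk i))) = w := by
  obtain ⟨h1, h2, h3, h4⟩ := Gprop hw hdes hk
  set q : Fin k → ℕ := fun i => pcnt w false (S.orderEmbOfFin hk i) with hq
  set p : Fin k → ℕ := fun i => pcnt w true (S.orderEmbOfFin hk i) with hp
  obtain ⟨hdyck', hdes', hval'⟩ := Fprop hn h1 h2 h3 h4
  apply word_eq (hdes'.trans hdes.symm)
  · intro s hs
    rw [hdes'] at hs
    have : s ∈ Set.range (S.orderEmbOfFin hk) := by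
      rw [S.range_orderEmbOfFin hk]
      exact hs
    obtain ⟨i, rfl⟩ := this
    have hsum : q i + p i = S.orderEmbOfFin hk i := by
      have := pcnt_true_add_false w (S.orderEmbOfFin hk i)
      simp only [hq, hp]
      omega
    have hv2 := (hval' i).1
    rw [hsum] at hv2
    exact hv2
  · rw [hdyck'.1, hw.1]

/-- For `n > 0` and `S ⊆ [2n-1]` with `|S| = k`, the number of Dyck paths of
length `2n` with descent set `S` equals the number of semistandard Young
tableaux of shape `⟨2^k⟩` (columns `T.1`, `T.2` strictly increasing, rows
`T.1 i ≤ T.2 i` weakly increasing, positive entries `< n`) whose row sums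
`T.1 i + T.2 i` form the set `S`. -/
theorem card_descentSet_eq_card_ssyt (n k : ℕ) (hn : 0 < n)
    (S : Finset ℕ) (hS : S ⊆ Finset.Icc 1 (2 * n - 1)) (hk : S.card = k) :
    Nat.card {w : Fin (2 * n) → Bool // IsDyck n w ∧ Des w = S} =
      Nat.card {T : (Fin k → ℕ) × (Fin k → ℕ) //
        (∀ i j : Fin k, i < j → T.1 i < T.1 j) ∧
        (∀ i j : Fin k, i < j → T.2 i < T.2 j) ∧
        (∀ i : Fin k, 1 ≤ T.1 i ∧ T.1 i ≤ T.2 i ∧ T.2 i < n) ∧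
        Finset.image (fun i => T.1 i + T.2 i) Finset.univ = S} := by
  apply Nat.card_congr
  refine ⟨fun w => ⟨(fun i => pcnt w.1 false (S.orderEmbOfFin hk i),
      fun i => pcnt w.1 true (S.orderEmbOfFin hk i)), Gprop w.2.1 w.2.2 hk⟩,
    fun T => ⟨wrd n k (Pext n k T.1.2) (Pext n k T.1.1),
      (Fprop hn T.2.1 T.2.2.1 T.2.2.2.1 T.2.2.2.2).1,
      (Fprop hn T.2.1 T.2.2.1 T.2.2.2.1 T.2.2.2.2).2.1⟩, ?_, ?_⟩
  · rintro ⟨w, hw, hdes⟩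
    exact Subtype.ext (FGlemma hn hw hdes hk)
  · rintro ⟨⟨q, p⟩, h1, h2, h3, h4⟩
    apply Subtype.ext
    have := GFlemma hn h1 h2 h3 h4 hk
    exact Prod.ext (funext fun i => (this i).1) (funext fun i => (this i).2)
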